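/- Suppose m ≥ 2 and b_c (c = 1, …, m) are real numbers such that λ_{abc} = g_{ab} b_c is totally symmetric in a, b, c, where g_{ab} is a positive definite symmetric m×m matrix. Then b_c = 0 for all c. -/

import Mathlib

/-!
For fixed `d`, total symmetry of `g_{ac} b_d` (with `g` symmetric) says that the matrix `b_d • g`
is the rank-one matrix `b ⊗ g_d`. Multiplying by `g⁻¹` and taking traces gives `m b_d` on one side
and `(g⁻¹ b) ⬝ g_d = (g g⁻¹ b)_d = b_d` on the other, so `(m - 1) b = 0`.
-/

namespace Matrix

theorem card_smul_eq_self_of_smul_eq_vecMulVec {n R : Type*} [Fintype n] [DecidableEq n]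
    [CommRing R] {g : Matrix n n R} (hg : IsUnit g) {b : n → R}
    (h : ∀ d, b d • g = vecMulVec b (g d)) :
    (Fintype.card n : R) • b = b := by
  have hdet : IsUnit g.det := (isUnit_iff_isUnit_det g).mp hg
  funext d
  calc ((Fintype.card n : R) • b) d
      = trace (g⁻¹ * (b d • g)) := by
        rw [Matrix.mul_smul, nonsing_inv_mul g hdet, trace_smul, trace_one, Pi.smul_apply,
          smul_eq_mul, smul_eq_mul, mul_comm]
    _ = trace (g⁻¹ * vecMulVec b (g d)) := by rw [h d]
    _ = (g *ᵥ (g⁻¹ *ᵥ b)) d := by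
        rw [mul_vecMulVec, trace_vecMulVec, dotProduct_comm]
        rfl
    _ = b d := by rw [mulVec_mulVec, mul_nonsing_inv g hdet, one_mulVec]

end Matrix

open Matrix in
/-- If `m ≥ 2`, `g` is positive definite symmetric `m×m`, and
`λ_{abc} = g_{ab} b_c` is totally symmetric in `a, b, c`, then `b = 0`. -/
theorem totally_symmetric_forces_zero {m : ℕ} (hm : 2 ≤ m)
    (g : Matrix (Fin m) (Fin m) ℝ) (hg : g.PosDef)
    (b : Fin m → ℝ)
    (hsym : ∀ a c d : Fin m,
      g a c * b d = g c d * b a ∧ g c d * b a = g d a * b c) :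
    b = 0 := by
  have hrank_one : ∀ d, b d • g = vecMulVec b (g d) := by
    intro d
    ext a c
    rw [Matrix.smul_apply, vecMulVec_apply, smul_eq_mul, mul_comm, (hsym a c d).1,
      ← hg.isHermitian.apply, star_trivial, mul_comm]
  have hfixed := card_smul_eq_self_of_smul_eq_vecMulVec hg.isUnit hrank_one
  rw [Fintype.card_fin] at hfixed
  have hm1 : (m : ℝ) - 1 ≠ 0 := by
    have : (2 : ℝ) ≤ m := by exact_mod_cast hm
    linarith
  have hzero : ((m : ℝ) - 1) • b = 0 := by rw [sub_smul, one_smul, hfixed, sub_self]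
  exact (smul_eq_zero.mp hzero).resolve_left hm1
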